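/- arXiv:2605.23104 — 2 statements merged into one kernel-verified Lean document; each statement's English description precedes it below -/
import Mathlib

section
/- Let (Xᵢ)_{i∈[n]} be discrete random variables and S₁,…,Sₘ ⊆ [n] be subsets such that each i ∈ [n] belongs to at least k of the sets Sⱼ. Then k·H(X₁,…,Xₙ) ≤ ∑_{j=1}^m H(Xᵢ : i ∈ Sⱼ). -/
/-!
Joint entropy `A ↦ H(Xᵢ : i ∈ A)` is monotone, submodular and vanishes at `∅`, and Shearer's
inequality holds for every such set function: add the indices one at a time; when `a` joins `U`,
submodularity bounds the increment of `f` by the increment of `f (S j ∩ ·)` for each of the at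
least `k` sets `S j` containing `a`. Submodularity of entropy, `H(F,K) + H(G) ≤ H(F) + H(K)` when
`G` is a function of both `F` and `K`, is the nonnegativity of the conditional mutual information
`I(F; K | G)`, which follows from `log x ≤ x - 1`.
-/

open Finset

open Classical in
noncomputable def prob {Ω : Type*} [Fintype Ω] (μ : Ω → ℝ) (E : Set Ω) : ℝ :=
  ∑ ω, if ω ∈ E then μ ω else 0

noncomputable def entropy {Ω α : Type*} [Fintype Ω] (μ : Ω → ℝ) (X : Ω → α) : ℝ :=
  -∑ ω, μ ω * Real.logb 2 (prob μ {ω' | X ω' = X ω})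

theorem shearer_of_submodular {ι J : Type*} [DecidableEq ι] [Fintype J] {f : Finset ι → ℝ}
    (hmono : Monotone f) (hsub : ∀ A B, f (A ∪ B) + f (A ∩ B) ≤ f A + f B) (hempty : f ∅ = 0)
    (S : J → Finset ι) {k : ℕ} (U : Finset ι) (hcover : ∀ i ∈ U, k ≤ #{j | i ∈ S j}) :
    k * f U ≤ ∑ j, f (S j ∩ U) := by
  induction U using Finset.induction_on with
  | empty => simp [hempty]
  | insert a U ha ih =>
    have hinc : ∀ j, a ∈ S j →
        f (insert a U) - f U ≤ f (S j ∩ insert a U) - f (S j ∩ U) := by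
      intro j haj
      have h := hsub (S j ∩ insert a U) U
      rw [show S j ∩ insert a U ∪ U = insert a U by grind,
        show S j ∩ insert a U ∩ U = S j ∩ U by grind] at h
      linarith
    have hout : ∀ j, a ∉ S j → S j ∩ insert a U = S j ∩ U := by grind
    have hstep : 0 ≤ f (insert a U) - f U := sub_nonneg.2 (hmono (subset_insert a U))
    have hka : (k : ℝ) ≤ #{j | a ∈ S j} := by exact_mod_cast hcover a (mem_insert_self a U)
    calc k * f (insert a U) = k * f U + k * (f (insert a U) - f U) := by ring
      _ ≤ ∑ j, f (S j ∩ U) + #{j | a ∈ S j} * (f (insert a U) - f U) := by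
        gcongr
        exact ih fun i hi => hcover i (mem_insert_of_mem hi)
      _ = ∑ j, f (S j ∩ U) + ∑ j with a ∈ S j, (f (insert a U) - f U) := by
        rw [sum_const, nsmul_eq_mul]
      _ ≤ ∑ j, f (S j ∩ U) + ∑ j with a ∈ S j, (f (S j ∩ insert a U) - f (S j ∩ U)) := by
        exact add_le_add_right (sum_le_sum fun j hj => hinc j (mem_filter.1 hj).2) _
      _ = ∑ j, f (S j ∩ insert a U) := by
        rw [sum_filter, ← sum_add_distrib]
        refine sum_congr rfl fun j _ => ?_
        split_ifs with h
        · ring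
        · rw [hout j h, add_zero]

section

variable {Ω α β : Type*} [Fintype Ω] {μ : Ω → ℝ}

theorem prob_eq_sum_filter (E : Set Ω) [DecidablePred (· ∈ E)] :
    prob μ E = ∑ ω with ω ∈ E, μ ω := by
  rw [prob, sum_filter]
  congr!

theorem prob_mono (hμ : ∀ ω, 0 ≤ μ ω) {E F : Set Ω} (h : E ⊆ F) : prob μ E ≤ prob μ F := by
  classical
  rw [prob_eq_sum_filter, prob_eq_sum_filter]
  exact sum_le_sum_of_subset_of_nonneg (monotone_filter_right _ fun _ _ hω => h hω)
    fun ω _ _ => hμ ω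

theorem le_prob (hμ : ∀ ω, 0 ≤ μ ω) {E : Set Ω} {ω : Ω} (h : ω ∈ E) : μ ω ≤ prob μ E := by
  classical
  rw [prob_eq_sum_filter]
  exact single_le_sum (fun ω _ => hμ ω) (mem_filter.2 ⟨mem_univ ω, h⟩)

noncomputable def fiberProb (μ : Ω → ℝ) (X : Ω → α) (ω : Ω) : ℝ :=
  prob μ {ω' | X ω' = X ω}

theorem fiberProb_eq_sum [DecidableEq α] (X : Ω → α) (ω : Ω) :
    fiberProb μ X ω = ∑ ω', if X ω' = X ω then μ ω' else 0 := by
  rw [fiberProb, prob]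
  congr!

theorem fiberProb_congr {X : Ω → α} {ω ω' : Ω} (h : X ω = X ω') :
    fiberProb μ X ω = fiberProb μ X ω' := by
  rw [fiberProb, fiberProb, h]

theorem fiberProb_nonneg (hμ : ∀ ω, 0 ≤ μ ω) (X : Ω → α) (ω : Ω) : 0 ≤ fiberProb μ X ω :=
  (hμ ω).trans (le_prob hμ rfl)

theorem fiberProb_pos (hμ : ∀ ω, 0 ≤ μ ω) (X : Ω → α) {ω : Ω} (hω : 0 < μ ω) :
    0 < fiberProb μ X ω :=
  hω.trans_le (le_prob hμ rfl)

theorem entropy_eq_neg_sum_log (X : Ω → α) :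
    entropy μ X = -(∑ ω, μ ω * Real.log (fiberProb μ X ω)) / Real.log 2 := by
  simp only [entropy, Real.logb, neg_div, sum_div, mul_div_assoc, fiberProb]

def Determines (X : Ω → α) (Y : Ω → β) : Prop :=
  ∀ ω ω', X ω = X ω' → Y ω = Y ω'

theorem entropy_le_of_determines (hμ : ∀ ω, 0 ≤ μ ω) {X : Ω → α} {Y : Ω → β}
    (hXY : Determines X Y) : entropy μ Y ≤ entropy μ X := by
  refine neg_le_neg (sum_le_sum fun ω _ => ?_)
  rcases (hμ ω).eq_or_lt with h0 | h0
  · simp [← h0]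
  · exact mul_le_mul_of_nonneg_left (Real.logb_le_logb_of_le one_lt_two
      (fiberProb_pos hμ X h0) (prob_mono hμ fun ω' h => hXY ω' ω h)) h0.le

theorem entropy_of_subsingleton [Subsingleton α] (hμ1 : ∑ ω, μ ω = 1) (X : Ω → α) :
    entropy μ X = 0 := by
  have hfiber : ∀ ω, {ω' | X ω' = X ω} = Set.univ :=
    fun _ => Set.eq_univ_of_forall fun _ => Subsingleton.elim _ _
  simp [entropy, hfiber, prob, hμ1]

theorem sum_mul_log_nonpos (hμ : ∀ ω, 0 ≤ μ ω) {q : Ω → ℝ} (hq : ∀ ω, 0 < μ ω → 0 < q ω)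
    (h : ∑ ω, μ ω * q ω ≤ ∑ ω, μ ω) : ∑ ω, μ ω * Real.log (q ω) ≤ 0 :=
  calc ∑ ω, μ ω * Real.log (q ω) ≤ ∑ ω, μ ω * (q ω - 1) := by
        refine sum_le_sum fun ω _ => ?_
        rcases (hμ ω).eq_or_lt with h0 | h0
        · simp [← h0]
        · exact mul_le_mul_of_nonneg_left (Real.log_le_sub_one_of_pos (hq ω h0)) h0.le
    _ = ∑ ω, μ ω * q ω - ∑ ω, μ ω := by simp only [mul_sub, mul_one, sum_sub_distrib]
    _ ≤ 0 := sub_nonpos.2 h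

theorem sum_ite_div_fiberProb_le_one [DecidableEq β] (T : Ω → β) (t : β) :
    ∑ ω, (if T ω = t then μ ω / fiberProb μ T ω else 0) ≤ 1 := by
  have hfiber : ∀ ω, T ω = t → fiberProb μ T ω = ∑ ω', if T ω' = t then μ ω' else 0 :=
    fun ω h => by rw [fiberProb_eq_sum, h]
  calc ∑ ω, (if T ω = t then μ ω / fiberProb μ T ω else 0)
      = ∑ ω, (if T ω = t then μ ω else 0) / ∑ ω', (if T ω' = t then μ ω' else 0) :=
        sum_congr rfl fun ω _ => by split_ifs with h <;> simp [hfiber ω, h]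
    _ ≤ 1 := by rw [← sum_div]; exact div_self_le_one _

theorem sum_mul_fiberProb_ratio_le (hμ : ∀ ω, 0 ≤ μ ω) {γ : Type*}
    {F : Ω → α} {K : Ω → β} {G : Ω → γ}
    (hF : Determines F G) (hK : Determines K G) :
    ∑ ω, μ ω * (fiberProb μ F ω * fiberProb μ K ω /
      (fiberProb μ (fun ω => (F ω, K ω)) ω * fiberProb μ G ω)) ≤ ∑ ω, μ ω := by
  classical
  -- Expanding both numerators over pairs `(ω₁, ω₂)`, the `ω`-sum for a fixed pair runs over one
  -- fiber of `(F, K)`, so it is at most `1`; and the pair contributes only if `G ω₁ = G ω₂`.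
  have hexpand : ∀ ω, μ ω * (fiberProb μ F ω * fiberProb μ K ω /
      (fiberProb μ (fun ω => (F ω, K ω)) ω * fiberProb μ G ω)) =
      ∑ ω₁, ∑ ω₂, (if G ω₂ = G ω₁ then μ ω₁ * μ ω₂ / fiberProb μ G ω₁ else 0) *
        (if (F ω, K ω) = (F ω₁, K ω₂) then μ ω / fiberProb μ (fun ω => (F ω, K ω)) ω
          else 0) := by
    intro ω
    rw [fiberProb_eq_sum F, fiberProb_eq_sum K, sum_mul_sum, sum_div, mul_sum]
    refine sum_congr rfl fun ω₁ _ => ?_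
    rw [sum_div, mul_sum]
    refine sum_congr rfl fun ω₂ _ => ?_
    by_cases h₁ : F ω₁ = F ω
    · by_cases h₂ : K ω₂ = K ω
      · have hG₂ : G ω₂ = G ω₁ := (hK ω₂ ω h₂).trans (hF ω₁ ω h₁).symm
        rw [if_pos h₁, if_pos h₂, if_pos hG₂, if_pos (Prod.ext h₁.symm h₂.symm),
          fiberProb_congr (hF ω₁ ω h₁)]
        ring
      · simp [h₂, Ne.symm h₂]
    · simp [h₁, Ne.symm h₁]
  calc ∑ ω, μ ω * (fiberProb μ F ω * fiberProb μ K ω /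
        (fiberProb μ (fun ω => (F ω, K ω)) ω * fiberProb μ G ω))
      = ∑ ω₁, ∑ ω₂, (if G ω₂ = G ω₁ then μ ω₁ * μ ω₂ / fiberProb μ G ω₁ else 0) *
          ∑ ω, (if (F ω, K ω) = (F ω₁, K ω₂) then
            μ ω / fiberProb μ (fun ω => (F ω, K ω)) ω else 0) := by
        simp only [hexpand, mul_sum]
        rw [sum_comm]
        exact sum_congr rfl fun _ _ => sum_comm
    _ ≤ ∑ ω₁, ∑ ω₂, (if G ω₂ = G ω₁ then μ ω₁ * μ ω₂ / fiberProb μ G ω₁ else 0) := by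
        gcongr with ω₁ _ ω₂ _
        refine mul_le_of_le_one_right ?_ (sum_ite_div_fiberProb_le_one _ _)
        split_ifs
        exacts [div_nonneg (mul_nonneg (hμ _) (hμ _)) (fiberProb_nonneg hμ G ω₁), le_rfl]
    _ = ∑ ω₁, μ ω₁ * (fiberProb μ G ω₁ / fiberProb μ G ω₁) := by
        refine sum_congr rfl fun ω₁ _ => ?_
        nth_rw 2 [fiberProb_eq_sum]
        rw [sum_div, mul_sum]
        exact sum_congr rfl fun ω₂ _ => by split_ifs <;> ring
    _ ≤ ∑ ω, μ ω := sum_le_sum fun ω _ => mul_le_of_le_one_right (hμ ω) (div_self_le_one _)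

theorem entropy_prod_add_le (hμ : ∀ ω, 0 ≤ μ ω) {γ : Type*}
    {F : Ω → α} {K : Ω → β} {G : Ω → γ}
    (hF : Determines F G) (hK : Determines K G) :
    entropy μ (fun ω => (F ω, K ω)) + entropy μ G ≤ entropy μ F + entropy μ K := by
  have hlog := sum_mul_log_nonpos hμ
    (fun ω hω => by
      have := fiberProb_pos hμ F hω; have := fiberProb_pos hμ K hω
      have := fiberProb_pos hμ (fun ω => (F ω, K ω)) hω; have := fiberProb_pos hμ G hω
      positivity)
    (sum_mul_fiberProb_ratio_le hμ hF hK)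
  have hsplit : ∀ ω, μ ω * Real.log (fiberProb μ F ω * fiberProb μ K ω /
      (fiberProb μ (fun ω => (F ω, K ω)) ω * fiberProb μ G ω)) =
      μ ω * Real.log (fiberProb μ F ω) + μ ω * Real.log (fiberProb μ K ω)
        - μ ω * Real.log (fiberProb μ (fun ω => (F ω, K ω)) ω)
        - μ ω * Real.log (fiberProb μ G ω) := by
    intro ω
    rcases (hμ ω).eq_or_lt with h0 | h0
    · simp [← h0]
    · have hF0 := (fiberProb_pos hμ F h0).ne'
      have hK0 := (fiberProb_pos hμ K h0).ne'
      have hFK0 := (fiberProb_pos hμ (fun ω => (F ω, K ω)) h0).ne'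
      have hG0 := (fiberProb_pos hμ G h0).ne'
      rw [Real.log_div (mul_ne_zero hF0 hK0) (mul_ne_zero hFK0 hG0), Real.log_mul hF0 hK0,
        Real.log_mul hFK0 hG0]
      ring
  simp only [sum_congr rfl fun ω _ => hsplit ω, sum_sub_distrib, sum_add_distrib] at hlog
  simp only [entropy_eq_neg_sum_log, ← add_div]
  rw [div_le_div_iff_of_pos_right (Real.log_pos one_lt_two)]
  linarith

section Restrict

variable {ι : Type*} {κ : ι → Type*}

noncomputable def jointEntropy (μ : Ω → ℝ) (X : ∀ i, Ω → κ i) (A : Finset ι) : ℝ :=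
  entropy μ (fun ω => fun i : {x // x ∈ A} => X i.1 ω)

omit [Fintype Ω] in
theorem restrict_eq_restrict_iff (X : ∀ i, Ω → κ i) {A : Finset ι} {ω ω' : Ω} :
    ((fun i : {x // x ∈ A} => X i.1 ω) = fun i : {x // x ∈ A} => X i.1 ω') ↔
      ∀ i ∈ A, X i ω = X i ω' :=
  funext_iff.trans ⟨fun h i hi => h ⟨i, hi⟩, fun h i => h i.1 i.2⟩

theorem jointEntropy_mono (hμ : ∀ ω, 0 ≤ μ ω) (X : ∀ i, Ω → κ i) :
    Monotone (jointEntropy μ X) := fun A B hAB =>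
  entropy_le_of_determines hμ fun ω ω' h => by
    rw [restrict_eq_restrict_iff] at h ⊢
    exact fun i hi => h i (hAB hi)

theorem jointEntropy_empty (hμ1 : ∑ ω, μ ω = 1) (X : ∀ i, Ω → κ i) :
    jointEntropy μ X ∅ = 0 :=
  entropy_of_subsingleton hμ1 _

theorem jointEntropy_union_add_inter_le [DecidableEq ι] (hμ : ∀ ω, 0 ≤ μ ω)
    (X : ∀ i, Ω → κ i) (A B : Finset ι) :
    jointEntropy μ X (A ∪ B) + jointEntropy μ X (A ∩ B) ≤
      jointEntropy μ X A + jointEntropy μ X B := by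
  have hrestrict {C D : Finset ι} (hCD : C ⊆ D) : Determines
      (fun ω => fun i : {x // x ∈ D} => X i.1 ω) (fun ω => fun i : {x // x ∈ C} => X i.1 ω) :=
    fun ω ω' h =>
      (restrict_eq_restrict_iff X).2 fun i hi => (restrict_eq_restrict_iff X).1 h i (hCD hi)
  have hunion : jointEntropy μ X (A ∪ B) ≤ entropy μ (fun ω =>
      ((fun i : {x // x ∈ A} => X i.1 ω), (fun i : {x // x ∈ B} => X i.1 ω))) :=
    entropy_le_of_determines hμ fun ω ω' h => by
      obtain ⟨hA, hB⟩ := Prod.ext_iff.1 h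
      rw [restrict_eq_restrict_iff] at hA hB ⊢
      intro i hi
      rcases mem_union.1 hi with hi | hi
      exacts [hA i hi, hB i hi]
  have hsub := entropy_prod_add_le hμ (hrestrict inter_subset_left)
    (hrestrict (inter_subset_right (s₁ := A) (s₂ := B)))
  exact (add_le_add hunion le_rfl).trans hsub

end Restrict

end

/-- **Shearer's lemma.**  If each index `i ∈ [n]` belongs to at least `k` of the
sets `S₁,…,Sₘ`, then `k·H(X₁,…,Xₙ) ≤ ∑ⱼ H(Xᵢ : i ∈ Sⱼ)`. -/
theorem shearer {Ω : Type*} [Fintype Ω] (μ : Ω → ℝ)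
    (hμ0 : ∀ ω, 0 ≤ μ ω) (hμ1 : ∑ ω, μ ω = 1)
    {n m k : ℕ} {α : Fin n → Type*} (X : ∀ i, Ω → α i)
    (S : Fin m → Finset (Fin n))
    (hcover : ∀ i : Fin n, k ≤ (Finset.univ.filter (fun j => i ∈ S j)).card) :
    (k : ℝ) * entropy μ (fun ω => fun i : Fin n => X i ω)
      ≤ ∑ j : Fin m, entropy μ (fun ω => fun i : {x // x ∈ S j} => X i.1 ω) := by
  have hfull : entropy μ (fun ω => fun i : Fin n => X i ω) = jointEntropy μ X univ := by
    refine le_antisymm (entropy_le_of_determines hμ0 fun ω ω' h => ?_)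
      (entropy_le_of_determines hμ0 fun ω ω' h => ?_)
    · exact funext fun i => (restrict_eq_restrict_iff X).1 h i (mem_univ i)
    · exact (restrict_eq_restrict_iff X).2 fun i _ => congrFun h i
  have h := shearer_of_submodular (jointEntropy_mono hμ0 X)
    (jointEntropy_union_add_inter_le hμ0 X) (jointEntropy_empty hμ1 X) S univ
    fun i _ => hcover i
  simp only [inter_univ] at h
  rwa [hfull]
end

section
/- Let (I_t)_{t} be uniform random indices in [N], let X ∈ {0,1}^N have i.i.d. entries, and let S ⊆ [N] be the (random) set of indices appearing among q i.i.d. uniform samples from [N]. Let μ = Pr[i ∈ S] = 1 − (1 − 1/N)^q for any fixed i. Then μ ≤ q/N, and for any random variable M with I(M; X) ≤ c one has E_S[I(M; X_S)] ≤ (q/N)·c, where X_S denotes the restriction of X to coordinates in S. -/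
open Finset

-- Conditional entropy `H(X | Y) = H(X,Y) − H(Y)`.
noncomputable def condEntropy {Ω α β : Type*} [Fintype Ω] (μ : Ω → ℝ)
    (X : Ω → α) (Y : Ω → β) : ℝ :=
  entropy μ (fun ω => (X ω, Y ω)) - entropy μ Y


-- Mutual information `I(X ; Y) = H(X) + H(Y) − H(X,Y)`.
noncomputable def mutInfo {Ω α β : Type*} [Fintype Ω] (μ : Ω → ℝ)
    (X : Ω → α) (Y : Ω → β) : ℝ :=
  entropy μ X + entropy μ Y - entropy μ (fun ω => (X ω, Y ω))

/-! With `a_i = H(X_i) - H(X_i | X_{<i}, M)`, the chain rule and "conditioning reduces entropy"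
give `I(M ; X_S) ≤ ∑_{i ∈ S} a_i` for every index set `S`, with equality for `S = [N]` when the
coordinates are independent, since then `H(X) = ∑ H(X_i)`. A fixed index lies in the sampled set
for a fraction `1 - (1 - 1/N)^q` of the `N^q` sample sequences, so averaging over the samples gives
`E_S[I(M ; X_S)] ≤ (1 - (1 - 1/N)^q) I(M ; X) ≤ (q/N) c` by Bernoulli's inequality.
"Conditioning reduces entropy" is Gibbs' inequality, proved from `log x ≤ x - 1`. -/

section Probability

variable {Ω : Type*} [Fintype Ω] {μ : Ω → ℝ}

lemma prob_setOf_eq_sum_filter (P : Ω → Prop) [DecidablePred P] :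
    prob μ {ω | P ω} = ∑ ω with P ω, μ ω := by
  rw [sum_filter]
  exact sum_congr rfl fun ω _ => by simp

lemma prob_nonneg (h0 : ∀ ω, 0 ≤ μ ω) (E : Set Ω) : 0 ≤ prob μ E :=
  sum_nonneg fun ω _ => by split_ifs <;> simp [h0 ω]

lemma le_prob_of_mem (h0 : ∀ ω, 0 ≤ μ ω) {E : Set Ω} {ω : Ω} (h : ω ∈ E) :
    μ ω ≤ prob μ E := by
  classical
  unfold prob
  calc μ ω = if ω ∈ E then μ ω else 0 := by simp [h]
    _ ≤ _ := single_le_sum (f := fun ω => if ω ∈ E then μ ω else 0)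
      (fun ω _ => by split_ifs <;> simp [h0 ω]) (mem_univ ω)

lemma sum_mul_eq_sum_image_prob {α : Type*} [DecidableEq α] (W : Ω → α) (f : α → ℝ) :
    ∑ ω, μ ω * f (W ω) = ∑ w ∈ univ.image W, prob μ {ω | W ω = w} * f w := by
  classical
  rw [← sum_fiberwise_of_maps_to (g := W) fun ω _ => mem_image_of_mem W (mem_univ ω)]
  refine sum_congr rfl fun w _ => ?_
  rw [prob_setOf_eq_sum_filter, sum_mul]
  exact sum_congr rfl fun ω hω => by rw [(mem_filter.1 hω).2]

lemma sum_image_prob_and {α : Type*} [DecidableEq α] (X : Ω → α) (Q : Ω → Prop) :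
    ∑ a ∈ univ.image X, prob μ {ω | X ω = a ∧ Q ω} = prob μ {ω | Q ω} := by
  classical
  simp_rw [prob_setOf_eq_sum_filter]
  rw [← sum_fiberwise_of_maps_to (s := univ.filter Q) (g := X)
    fun ω _ => mem_image_of_mem X (mem_univ ω)]
  simp_rw [filter_filter, and_comm]

lemma sum_image_prob_eq_one (h1 : ∑ ω, μ ω = 1) {α : Type*} [DecidableEq α] (X : Ω → α) :
    ∑ a ∈ univ.image X, prob μ {ω | X ω = a} = 1 := by
  have h := sum_image_prob_and (μ := μ) X fun _ => True
  simp only [and_true] at h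
  rw [h, ← h1]
  simp [prob]

end Probability

section Identities

variable {Ω α β γ : Type*} [Fintype Ω] {μ : Ω → ℝ}

lemma entropy_eq_of_fiber {X : Ω → α} (P : Ω → Ω → Prop)
    (hP : ∀ ω ω', X ω' = X ω ↔ P ω ω') :
    entropy μ X = -∑ ω, μ ω * Real.logb 2 (prob μ {ω' | P ω ω'}) := by
  simp only [entropy, Set.ext fun ω' => hP _ ω']

lemma entropy_congr {X : Ω → α} {Y : Ω → β} (h : ∀ ω ω', X ω = X ω' ↔ Y ω = Y ω') :
    entropy μ X = entropy μ Y :=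
  entropy_eq_of_fiber _ fun ω ω' => h ω' ω

lemma condEntropy_congr {α' β' : Type*} {X : Ω → α} {X' : Ω → α'} {Y : Ω → β} {Y' : Ω → β'}
    (hX : ∀ ω ω', X ω = X ω' ↔ X' ω = X' ω') (hY : ∀ ω ω', Y ω = Y ω' ↔ Y' ω = Y' ω') :
    condEntropy μ X Y = condEntropy μ X' Y' := by
  rw [condEntropy, condEntropy, entropy_congr hY,
    entropy_congr (Y := fun ω => (X' ω, Y' ω))
      fun ω ω' => by simp only [Prod.ext_iff, hX ω ω', hY ω ω']]

lemma mutInfo_congr_right {β' : Type*} {M : Ω → α} {Y : Ω → β} {Y' : Ω → β'}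
    (hY : ∀ ω ω', Y ω = Y ω' ↔ Y' ω = Y' ω') :
    mutInfo μ M Y = mutInfo μ M Y' := by
  rw [mutInfo, mutInfo, entropy_congr hY,
    entropy_congr (X := fun ω => (M ω, Y ω)) (Y := fun ω => (M ω, Y' ω))
      fun ω ω' => by simp only [Prod.ext_iff, hY ω ω']]

lemma mutInfo_eq_entropy_sub_condEntropy (M : Ω → α) (Y : Ω → β) :
    mutInfo μ M Y = entropy μ Y - condEntropy μ Y M := by
  rw [mutInfo, condEntropy, entropy_congr (X := fun ω => (M ω, Y ω)) (Y := fun ω => (Y ω, M ω))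
    fun ω ω' => by simp only [Prod.ext_iff, and_comm]]
  ring

lemma condEntropy_pair_left (X : Ω → α) (Y : Ω → β) (Z : Ω → γ) :
    condEntropy μ (fun ω => (X ω, Y ω)) Z
      = condEntropy μ Y Z + condEntropy μ X (fun ω => (Y ω, Z ω)) := by
  rw [condEntropy, condEntropy, condEntropy,
    entropy_congr (X := fun ω => ((X ω, Y ω), Z ω)) (Y := fun ω => (X ω, Y ω, Z ω))
      fun ω ω' => by simp only [Prod.ext_iff, and_assoc]]
  ring

lemma condEntropy_const_left (b : α) (Y : Ω → β) : condEntropy μ (fun _ => b) Y = 0 := by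
  rw [condEntropy, entropy_congr (X := fun ω => (b, Y ω)) (Y := Y)
    fun ω ω' => by simp only [Prod.ext_iff, true_and]]
  ring

lemma condEntropy_const_right (h1 : ∑ ω, μ ω = 1) (X : Ω → α) (b : β) :
    condEntropy μ X (fun _ => b) = entropy μ X := by
  have hb : entropy μ (fun _ : Ω => b) = 0 := by
    simp [entropy, prob, h1]
  rw [condEntropy, hb, sub_zero, entropy_congr (X := fun ω => (X ω, b)) (Y := X)
    fun ω ω' => by simp only [Prod.ext_iff, and_true]]

end Identities

section ConditioningReducesEntropy

variable {Ω α β γ : Type*} [Fintype Ω] {μ : Ω → ℝ}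

lemma sum_mul_logb_nonpos (h0 : ∀ ω, 0 ≤ μ ω) (h1 : ∑ ω, μ ω = 1) {r : Ω → ℝ}
    (hr : ∀ ω, 0 < μ ω → 0 < r ω) (hsum : ∑ ω, μ ω * r ω ≤ 1) :
    ∑ ω, μ ω * Real.logb 2 (r ω) ≤ 0 := by
  have hlog2 : 0 < Real.log 2 := Real.log_pos one_lt_two
  have hterm : ∀ ω, μ ω * Real.logb 2 (r ω) ≤ μ ω * (r ω - 1) / Real.log 2 := by
    intro ω
    rcases (h0 ω).eq_or_lt with hω | hω
    · simp [← hω]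
    · rw [mul_div_assoc, Real.logb]
      exact mul_le_mul_of_nonneg_left
        (div_le_div_of_nonneg_right (Real.log_le_sub_one_of_pos (hr ω hω)) hlog2.le) hω.le
  calc ∑ ω, μ ω * Real.logb 2 (r ω) ≤ ∑ ω, μ ω * (r ω - 1) / Real.log 2 :=
        sum_le_sum fun ω _ => hterm ω
    _ = (∑ ω, μ ω * r ω - ∑ ω, μ ω) / Real.log 2 := by
      rw [← sum_div, ← sum_sub_distrib]
      simp only [mul_sub, mul_one]
    _ ≤ 0 := div_nonpos_of_nonpos_of_nonneg (by linarith) hlog2.le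

-- Grouped by the value `(z, x, y)`, each value contributes at most `p(x,z) p(y,z) / p(z)`;
-- summing over `x` and `y` leaves `∑_z p(z) = 1`.
lemma sum_mul_prob_ratio_le_one (h0 : ∀ ω, 0 ≤ μ ω) (h1 : ∑ ω, μ ω = 1)
    (X : Ω → α) (Y : Ω → β) (Z : Ω → γ) :
    ∑ ω, μ ω * (prob μ {ω' | X ω' = X ω ∧ Z ω' = Z ω} * prob μ {ω' | Y ω' = Y ω ∧ Z ω' = Z ω} /
      (prob μ {ω' | (Z ω', X ω', Y ω') = (Z ω, X ω, Y ω)} * prob μ {ω' | Z ω' = Z ω})) ≤ 1 := by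
  classical
  set pz : γ → ℝ := fun z => prob μ {ω | Z ω = z}
  set pxz : α → γ → ℝ := fun x z => prob μ {ω | X ω = x ∧ Z ω = z}
  set pyz : β → γ → ℝ := fun y z => prob μ {ω | Y ω = y ∧ Z ω = z}
  set W : Ω → γ × α × β := fun ω => (Z ω, X ω, Y ω)
  set G : γ × α × β → ℝ := fun w => pxz w.2.1 w.1 * pyz w.2.2 w.1 / pz w.1
  have hG : ∀ w, 0 ≤ G w := fun w =>
    div_nonneg (mul_nonneg (prob_nonneg h0 _) (prob_nonneg h0 _)) (prob_nonneg h0 _)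
  have hfibre : ∀ w, prob μ {ω | W ω = w} * (G w * (prob μ {ω | W ω = w})⁻¹) ≤ G w := by
    intro w
    rcases (prob_nonneg h0 {ω | W ω = w}).eq_or_lt with hw | hw
    · simpa [← hw] using hG w
    · rw [mul_left_comm, mul_inv_cancel₀ hw.ne', mul_one]
  have hslice : ∀ z, ∑ x ∈ univ.image X, ∑ y ∈ univ.image Y, G (z, x, y) ≤ pz z := by
    intro z
    have hx : ∑ x ∈ univ.image X, pxz x z = pz z := sum_image_prob_and X _
    have hy : ∑ y ∈ univ.image Y, pyz y z = pz z := sum_image_prob_and Y _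
    have hsplit : ∑ x ∈ univ.image X, ∑ y ∈ univ.image Y, G (z, x, y)
        = (∑ x ∈ univ.image X, pxz x z) * (∑ y ∈ univ.image Y, pyz y z) / pz z := by
      simp only [G, sum_mul_sum, sum_div]
    rw [hsplit, hx, hy, mul_self_div_self]
  calc _ = ∑ ω, μ ω * (G (W ω) * (prob μ {ω' | W ω' = W ω})⁻¹) := by
        refine sum_congr rfl fun ω _ => ?_
        simp only [G, W, pxz, pyz, pz]
        ring
    _ = ∑ w ∈ univ.image W, prob μ {ω | W ω = w} * (G w * (prob μ {ω | W ω = w})⁻¹) :=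
        sum_mul_eq_sum_image_prob W fun w => G w * (prob μ {ω | W ω = w})⁻¹
    _ ≤ ∑ w ∈ univ.image W, G w := sum_le_sum fun w _ => hfibre w
    _ ≤ ∑ w ∈ univ.image Z ×ˢ univ.image X ×ˢ univ.image Y, G w := by
        refine sum_le_sum_of_subset_of_nonneg ?_ fun w _ _ => hG w
        intro w hw
        obtain ⟨ω, -, rfl⟩ := mem_image.1 hw
        simp [W]
    _ = ∑ z ∈ univ.image Z, ∑ x ∈ univ.image X, ∑ y ∈ univ.image Y, G (z, x, y) := by
        simp only [sum_product]
    _ ≤ ∑ z ∈ univ.image Z, pz z := sum_le_sum fun z _ => hslice z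
    _ = 1 := sum_image_prob_eq_one h1 Z

lemma condEntropy_pair_le (h0 : ∀ ω, 0 ≤ μ ω) (h1 : ∑ ω, μ ω = 1)
    (X : Ω → α) (Y : Ω → β) (Z : Ω → γ) :
    condEntropy μ X (fun ω => (Y ω, Z ω)) ≤ condEntropy μ X Z := by
  set pxyz : Ω → ℝ := fun ω => prob μ {ω' | (Z ω', X ω', Y ω') = (Z ω, X ω, Y ω)}
  set pxz : Ω → ℝ := fun ω => prob μ {ω' | X ω' = X ω ∧ Z ω' = Z ω}
  set pyz : Ω → ℝ := fun ω => prob μ {ω' | Y ω' = Y ω ∧ Z ω' = Z ω}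
  set pz : Ω → ℝ := fun ω => prob μ {ω' | Z ω' = Z ω}
  have hxyz : entropy μ (fun ω => (X ω, Y ω, Z ω)) = -∑ ω, μ ω * Real.logb 2 (pxyz ω) :=
    entropy_eq_of_fiber _ fun ω ω' => by simp only [Prod.ext_iff]; tauto
  have hxz : entropy μ (fun ω => (X ω, Z ω)) = -∑ ω, μ ω * Real.logb 2 (pxz ω) :=
    entropy_eq_of_fiber _ fun ω ω' => Prod.ext_iff
  have hyz : entropy μ (fun ω => (Y ω, Z ω)) = -∑ ω, μ ω * Real.logb 2 (pyz ω) :=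
    entropy_eq_of_fiber _ fun ω ω' => Prod.ext_iff
  have hpos : ∀ ω, 0 < μ ω → 0 < pxyz ω ∧ 0 < pxz ω ∧ 0 < pyz ω ∧ 0 < pz ω := fun ω hω =>
    ⟨hω.trans_le (le_prob_of_mem h0 rfl), hω.trans_le (le_prob_of_mem h0 ⟨rfl, rfl⟩),
      hω.trans_le (le_prob_of_mem h0 ⟨rfl, rfl⟩), hω.trans_le (le_prob_of_mem h0 rfl)⟩
  have hlog : ∀ ω, μ ω * Real.logb 2 (pxz ω * pyz ω / (pxyz ω * pz ω))
      = μ ω * Real.logb 2 (pxz ω) + μ ω * Real.logb 2 (pyz ω)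
        - μ ω * Real.logb 2 (pxyz ω) - μ ω * Real.logb 2 (pz ω) := by
    intro ω
    rcases (h0 ω).eq_or_lt with hω | hω
    · simp [← hω]
    · obtain ⟨ha, hb, hc, hd⟩ := hpos ω hω
      rw [Real.logb_div (by positivity) (by positivity), Real.logb_mul hb.ne' hc.ne',
        Real.logb_mul ha.ne' hd.ne']
      ring
  have hgibbs := sum_mul_logb_nonpos h0 h1 (r := fun ω => pxz ω * pyz ω / (pxyz ω * pz ω))
    (fun ω hω => by obtain ⟨ha, hb, hc, hd⟩ := hpos ω hω; positivity)
    (sum_mul_prob_ratio_le_one h0 h1 X Y Z)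
  simp only [hlog, sum_sub_distrib, sum_add_distrib] at hgibbs
  rw [condEntropy, condEntropy, hxyz, hxz, hyz]
  unfold entropy
  linarith

lemma condEntropy_le_condEntropy_of_determines (h0 : ∀ ω, 0 ≤ μ ω) (h1 : ∑ ω, μ ω = 1)
    {X : Ω → α} {Y : Ω → β} {Z : Ω → γ} (h : ∀ ω ω', Y ω = Y ω' → Z ω = Z ω') :
    condEntropy μ X Y ≤ condEntropy μ X Z := by
  rw [condEntropy_congr (fun _ _ => Iff.rfl) (Y' := fun ω => (Y ω, Z ω))
    fun ω ω' => ⟨fun hY => Prod.ext hY (h ω ω' hY), fun hYZ => (Prod.ext_iff.1 hYZ).1⟩]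
  exact condEntropy_pair_le h0 h1 X Y Z

lemma condEntropy_le_entropy (h0 : ∀ ω, 0 ≤ μ ω) (h1 : ∑ ω, μ ω = 1) (X : Ω → α) (Y : Ω → β) :
    condEntropy μ X Y ≤ entropy μ X := by
  rw [← condEntropy_const_right h1 X ()]
  exact condEntropy_le_condEntropy_of_determines h0 h1 fun _ _ _ => rfl

lemma mutInfo_nonneg (h0 : ∀ ω, 0 ≤ μ ω) (h1 : ∑ ω, μ ω = 1) (M : Ω → α) (Y : Ω → β) :
    0 ≤ mutInfo μ M Y := by
  rw [mutInfo_eq_entropy_sub_condEntropy]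
  exact sub_nonneg.2 (condEntropy_le_entropy h0 h1 Y M)

end ConditioningReducesEntropy

lemma Finset.restrict_eq_restrict_iff {ι : Type*} {π : ι → Type*} {s : Finset ι}
    {f g : (i : ι) → π i} : s.restrict f = s.restrict g ↔ ∀ i ∈ s, f i = g i := by
  simp [funext_iff]

section Coordinates

variable {Ω ι α β : Type*} [Fintype Ω] {μ : Ω → ℝ}

lemma entropy_eq_sum_of_indep [Fintype ι] (h0 : ∀ ω, 0 ≤ μ ω) {X : Ω → ι → α}
    (hindep : ∀ b : ι → α, prob μ {ω | ∀ i, X ω i = b i} = ∏ i, prob μ {ω | X ω i = b i}) :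
    entropy μ X = ∑ i, entropy μ (fun ω => X ω i) := by
  have hterm : ∀ ω, μ ω * Real.logb 2 (∏ i, prob μ {ω' | X ω' i = X ω i})
      = ∑ i, μ ω * Real.logb 2 (prob μ {ω' | X ω' i = X ω i}) := by
    intro ω
    rcases (h0 ω).eq_or_lt with hω | hω
    · simp [← hω]
    · rw [Real.logb_prod univ (fun i => prob μ {ω' | X ω' i = X ω i})
        fun i _ => (hω.trans_le (le_prob_of_mem (E := {ω' | X ω' i = X ω i}) h0 rfl)).ne',
        mul_sum]
  rw [entropy_eq_of_fiber (fun ω ω' => ∀ i, X ω' i = X ω i) fun _ _ => funext_iff]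
  simp only [hindep, hterm]
  rw [sum_comm, ← sum_neg_distrib]
  rfl

variable [LinearOrder ι]

lemma condEntropy_restrict_eq_sum (X : Ω → ι → α) (Y : Ω → β) (S : Finset ι) :
    condEntropy μ (fun ω => S.restrict (X ω)) Y
      = ∑ i ∈ S, condEntropy μ (fun ω => X ω i)
          (fun ω => ((S.filter (· < i)).restrict (X ω), Y ω)) := by
  induction S using Finset.induction_on_max with
  | empty =>
    rw [sum_empty, ← condEntropy_const_left (μ := μ) () Y]
    exact condEntropy_congr
      (fun _ _ => iff_of_true (funext fun i => absurd i.2 (notMem_empty _)) rfl)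
      fun _ _ => Iff.rfl
  | insert a s hlt ih =>
    have ha : a ∉ s := fun h => lt_irrefl a (hlt a h)
    have hfilter_a : (insert a s).filter (· < a) = s := by
      rw [filter_insert, if_neg (lt_irrefl a), filter_true_of_mem hlt]
    have hfilter : ∀ i ∈ s, (insert a s).filter (· < i) = s.filter (· < i) := fun i hi => by
      rw [filter_insert, if_neg (hlt i hi).not_gt]
    rw [sum_insert ha, hfilter_a, sum_congr rfl fun i hi => by rw [hfilter i hi], ← ih,
      add_comm, ← condEntropy_pair_left]
    exact condEntropy_congr
      (fun ω ω' => by simp [Finset.restrict_eq_restrict_iff, Prod.ext_iff]) fun _ _ => Iff.rfl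

lemma entropy_restrict_le_sum (h0 : ∀ ω, 0 ≤ μ ω) (h1 : ∑ ω, μ ω = 1)
    (X : Ω → ι → α) (S : Finset ι) :
    entropy μ (fun ω => S.restrict (X ω)) ≤ ∑ i ∈ S, entropy μ (fun ω => X ω i) := by
  rw [← condEntropy_const_right h1 _ (), condEntropy_restrict_eq_sum]
  exact sum_le_sum fun i _ => condEntropy_le_entropy h0 h1 _ _

variable [Fintype ι]

/-- For independent coordinates this is the conditional mutual information `I(Y ; X_i | X_{<i})`. -/
noncomputable def coordInfo (μ : Ω → ℝ) (X : Ω → ι → α) (Y : Ω → β) (i : ι) : ℝ :=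
  entropy μ (fun ω => X ω i)
    - condEntropy μ (fun ω => X ω i) (fun ω => ((univ.filter (· < i)).restrict (X ω), Y ω))

lemma sum_condEntropy_prefix_le (h0 : ∀ ω, 0 ≤ μ ω) (h1 : ∑ ω, μ ω = 1)
    (X : Ω → ι → α) (Y : Ω → β) (S : Finset ι) :
    ∑ i ∈ S, condEntropy μ (fun ω => X ω i)
        (fun ω => ((univ.filter (· < i)).restrict (X ω), Y ω))
      ≤ condEntropy μ (fun ω => S.restrict (X ω)) Y := by
  rw [condEntropy_restrict_eq_sum]
  refine sum_le_sum fun i _ => condEntropy_le_condEntropy_of_determines h0 h1 fun ω ω' h => ?_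
  obtain ⟨hX, hY⟩ := Prod.ext_iff.1 h
  refine Prod.ext ?_ hY
  rw [Finset.restrict_eq_restrict_iff] at hX ⊢
  exact fun j hj => hX j (mem_filter.2 ⟨mem_univ j, (mem_filter.1 hj).2⟩)

lemma mutInfo_restrict_le_sum_coordInfo (h0 : ∀ ω, 0 ≤ μ ω) (h1 : ∑ ω, μ ω = 1)
    (X : Ω → ι → α) (Y : Ω → β) (S : Finset ι) :
    mutInfo μ Y (fun ω => S.restrict (X ω)) ≤ ∑ i ∈ S, coordInfo μ X Y i := by
  unfold coordInfo
  rw [mutInfo_eq_entropy_sub_condEntropy, sum_sub_distrib]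
  exact sub_le_sub (entropy_restrict_le_sum h0 h1 X S) (sum_condEntropy_prefix_le h0 h1 X Y S)

lemma mutInfo_eq_sum_coordInfo (h0 : ∀ ω, 0 ≤ μ ω) {X : Ω → ι → α}
    (hindep : ∀ b : ι → α, prob μ {ω | ∀ i, X ω i = b i} = ∏ i, prob μ {ω | X ω i = b i})
    (Y : Ω → β) :
    mutInfo μ Y X = ∑ i, coordInfo μ X Y i := by
  rw [mutInfo_eq_entropy_sub_condEntropy, entropy_eq_sum_of_indep h0 hindep,
    condEntropy_congr (X' := fun ω => univ.restrict (X ω))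
      (fun ω ω' => by simp [funext_iff]) fun _ _ => Iff.rfl,
    condEntropy_restrict_eq_sum, ← sum_sub_distrib]
  rfl

end Coordinates

section Sampling

variable {ι : Type*} [Fintype ι] [DecidableEq ι]

lemma card_filter_exists_apply_add_card_sub_one_pow (q : ℕ) (i : ι) :
    #{idx : Fin q → ι | ∃ t, idx t = i} + (Fintype.card ι - 1) ^ q = Fintype.card ι ^ q := by
  have hmiss : #{idx : Fin q → ι | ¬∃ t, idx t = i} = (Fintype.card ι - 1) ^ q := by
    rw [show ({idx : Fin q → ι | ¬∃ t, idx t = i} : Finset _)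
        = Fintype.piFinset fun _ => univ.erase i by ext idx; simp [Fintype.mem_piFinset]]
    simp [card_erase_of_mem]
  rw [← hmiss, card_filter_add_card_filter_not, card_univ, Fintype.card_fun, Fintype.card_fin]

lemma card_filter_exists_apply_div (q : ℕ) (i : ι) :
    (#{idx : Fin q → ι | ∃ t, idx t = i} : ℝ) / (Fintype.card ι : ℝ) ^ q
      = 1 - (1 - 1 / (Fintype.card ι : ℝ)) ^ q := by
  have hcard : 1 ≤ Fintype.card ι := Fintype.card_pos_iff.2 ⟨i⟩
  have hpos : (0 : ℝ) < Fintype.card ι := by exact_mod_cast hcard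
  have h := card_filter_exists_apply_add_card_sub_one_pow q i
  rw [← Nat.cast_inj (R := ℝ)] at h
  push_cast [Nat.cast_sub hcard] at h
  rw [div_eq_iff (by positivity), sub_mul, one_sub_div hpos.ne', div_pow,
    div_mul_cancel₀ _ (by positivity), one_mul]
  linarith

lemma inv_card_pow_mul_sum_sum_image (q : ℕ) (a : ι → ℝ) :
    ((Fintype.card ι : ℝ) ^ q)⁻¹ * ∑ idx : Fin q → ι, ∑ i ∈ univ.image idx, a i
      = (1 - (1 - 1 / (Fintype.card ι : ℝ)) ^ q) * ∑ i, a i := by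
  have hswap : ∑ idx : Fin q → ι, ∑ i ∈ univ.image idx, a i
      = ∑ i, (#{idx : Fin q → ι | ∃ t, idx t = i} : ℝ) * a i := by
    have himage (idx : Fin q → ι) : univ.image idx = ({i | ∃ t, idx t = i} : Finset ι) := by
      ext i; simp
    simp_rw [himage, sum_filter]
    rw [sum_comm]
    refine sum_congr rfl fun i _ => ?_
    rw [← sum_filter, sum_const, nsmul_eq_mul]
  rw [hswap, mul_sum, mul_sum]
  refine sum_congr rfl fun i _ => ?_
  rw [← mul_assoc, inv_mul_eq_div, card_filter_exists_apply_div]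

end Sampling

lemma one_sub_one_sub_inv_pow_le (N q : ℕ) : 1 - (1 - 1 / (N : ℝ)) ^ q ≤ q / N := by
  have hinv : 1 / (N : ℝ) ≤ 1 := by simpa using Nat.cast_inv_le_one N
  have h := one_add_mul_sub_le_pow (a := 1 - 1 / (N : ℝ)) (by linarith) q
  rw [div_eq_mul_one_div (q : ℝ)]
  linarith

open Classical in
theorem expected_restricted_mutInfo_bound_general {Ω γ : Type*} [Fintype Ω]
    (μ : Ω → ℝ) (hμ0 : ∀ ω, 0 ≤ μ ω) (hμ1 : ∑ ω, μ ω = 1)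
    (N q : ℕ)
    (X : Fin N → Ω → Bool) (M : Ω → γ) (c : ℝ)
    (hindep : ∀ b : Fin N → Bool,
      prob μ {ω | ∀ i, X i ω = b i} = ∏ i, prob μ {ω | X i ω = b i})
    (hc : mutInfo μ M (fun ω => fun i : Fin N => X i ω) ≤ c) :
    (∀ i : Fin N,
        (((Finset.univ : Finset (Fin q → Fin N)).filter
            (fun idx => ∃ t, idx t = i)).card : ℝ) / (N : ℝ) ^ q
          = 1 - (1 - 1 / (N : ℝ)) ^ q) ∧
    (1 - (1 - 1 / (N : ℝ)) ^ q ≤ (q : ℝ) / N) ∧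
    (((N : ℝ) ^ q)⁻¹ * ∑ idx : Fin q → Fin N,
        mutInfo μ M (fun ω => fun i : {i : Fin N // ∃ t, idx t = i} => X i.1 ω)
      ≤ ((q : ℝ) / N) * c) := by
  refine ⟨fun i => by simpa using card_filter_exists_apply_div q i,
    one_sub_one_sub_inv_pow_le N q, ?_⟩
  set Xv : Ω → Fin N → Bool := fun ω i => X i ω
  have hsample (idx : Fin q → Fin N) :
      mutInfo μ M (fun ω (i : {i // ∃ t, idx t = i}) => X i.1 ω)
        ≤ ∑ i ∈ univ.image idx, coordInfo μ Xv M i :=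
    (mutInfo_congr_right fun ω ω' => by simp [funext_iff, Xv]).trans_le
      (mutInfo_restrict_le_sum_coordInfo hμ0 hμ1 Xv M _)
  calc _ ≤ ((N : ℝ) ^ q)⁻¹ * ∑ idx : Fin q → Fin N,
          ∑ i ∈ univ.image idx, coordInfo μ Xv M i := by
        gcongr with idx
        exact hsample idx
    _ = (1 - (1 - 1 / (N : ℝ)) ^ q) * mutInfo μ M Xv := by
        rw [mutInfo_eq_sum_coordInfo hμ0 hindep M]
        simpa using inv_card_pow_mul_sum_sum_image q (coordInfo μ Xv M)
    _ ≤ q / N * c := mul_le_mul (one_sub_one_sub_inv_pow_le N q) hc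
        (mutInfo_nonneg hμ0 hμ1 _ _) (by positivity)

open Classical in
theorem expected_restricted_mutInfo_bound {Ω γ : Type*} [Fintype Ω]
    (μ : Ω → ℝ) (hμ0 : ∀ ω, 0 ≤ μ ω) (hμ1 : ∑ ω, μ ω = 1)
    (N q : ℕ) (hN : 1 ≤ N)
    (X : Fin N → Ω → Bool) (M : Ω → γ) (c : ℝ)
    (hindep : ∀ b : Fin N → Bool,
      prob μ {ω | ∀ i, X i ω = b i} = ∏ i, prob μ {ω | X i ω = b i})
    (hident : ∀ i j : Fin N,
      prob μ {ω | X i ω = true} = prob μ {ω | X j ω = true})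
    (hc : mutInfo μ M (fun ω => fun i : Fin N => X i ω) ≤ c) :
    (∀ i : Fin N,
        (((Finset.univ : Finset (Fin q → Fin N)).filter
            (fun idx => ∃ t, idx t = i)).card : ℝ) / (N : ℝ) ^ q
          = 1 - (1 - 1 / (N : ℝ)) ^ q) ∧
    (1 - (1 - 1 / (N : ℝ)) ^ q ≤ (q : ℝ) / N) ∧
    (((N : ℝ) ^ q)⁻¹ * ∑ idx : Fin q → Fin N,
        mutInfo μ M (fun ω => fun i : {i : Fin N // ∃ t, idx t = i} => X i.1 ω)
      ≤ ((q : ℝ) / N) * c) :=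
  expected_restricted_mutInfo_bound_general μ hμ0 hμ1 N q X M c hindep hc
end
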